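/- Let a, b, c, δ̄ > 0 with 4ab > c² and consider maximizing min(γ₁ D₁, γ₂ D₂) over γ₁, γ₂ > 0 subject to a γ₁² + b γ₂² − c γ₁ γ₂ ≤ δ̄, where D₁, D₂ > 0. If c < min(2aD₂/D₁, 2bD₁/D₂), then the maximum equals D₁D₂ · sqrt( δ̄ / (a D₂² − c D₁ D₂ + b D₁²) ), attained with γ₁ D₁ = γ₂ D₂. -/

import Mathlib

/-!
Write `q(x, y) = a x² + b y² − c x y` and `E = q(D₂, D₁)`. Along the ray `(D₂ t, D₁ t)`, on which
`γ₁ D₁ = γ₂ D₂`, homogeneity gives `q = t² E`, so the largest feasible point of the ray is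
`t = √(δ̄ / E)`, with value `D₁ D₂ t`. Conversely, if `γ₁ D₁ ≤ γ₂ D₂`, then `q(γ₁, ·)` is increasing
from `γ₁ D₁ / D₂` to `γ₂`, because the condition `c D₂ < 2 b D₁` puts its vertex `c γ₁ / (2b)`
to the left of `γ₁ D₁ / D₂`; hence no feasible point beats the ray. The other case is symmetric.
-/

namespace ThroughputOptimization

def quadForm (a b c x y : ℝ) : ℝ := a * x ^ 2 + b * y ^ 2 - c * x * y

variable {a b c : ℝ}

theorem quadForm_swap (x y : ℝ) : quadForm a b c x y = quadForm b a c y x := by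
  unfold quadForm; ring

theorem quadForm_mul_mul (u v t : ℝ) : quadForm a b c (u * t) (v * t) = t ^ 2 * quadForm a b c u v := by
  unfold quadForm; ring

theorem quadForm_pos {x y : ℝ} (hx : 0 < x) (hy : 0 < y) (hcx : c * y < 2 * a * x)
    (hcy : c * x < 2 * b * y) : 0 < quadForm a b c x y := by
  have h : 2 * quadForm a b c x y = (2 * a * x - c * y) * x + (2 * b * y - c * x) * y := by
    unfold quadForm; ring
  nlinarith [mul_pos (sub_pos.2 hcx) hx, mul_pos (sub_pos.2 hcy) hy]

theorem quadForm_le_quadForm_right (hb : 0 ≤ b) {x y y' : ℝ} (hvertex : c * x ≤ 2 * b * y)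
    (hyy' : y ≤ y') : quadForm a b c x y ≤ quadForm a b c x y' := by
  have h : quadForm a b c x y' - quadForm a b c x y = (y' - y) * (b * (y' + y) - c * x) := by
    unfold quadForm; ring
  nlinarith [mul_nonneg (sub_nonneg.2 hyy') (by nlinarith [mul_nonneg hb (sub_nonneg.2 hyy')] :
    0 ≤ b * (y' + y) - c * x)]

theorem sq_mul_quadForm_le_of_le (hb : 0 ≤ b) {D1 D2 x y : ℝ} (hD1 : 0 < D1) (hD2 : 0 < D2)
    (hcD : c * D2 ≤ 2 * b * D1) (hx : 0 ≤ x) (hle : x * D1 ≤ y * D2) :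
    (x * D1) ^ 2 * quadForm a b c D2 D1 ≤ (D1 * D2) ^ 2 * quadForm a b c x y := by
  set t := x / D2
  have hxt : x = D2 * t := (mul_div_cancel₀ x hD2.ne').symm
  have ht : 0 ≤ t := div_nonneg hx hD2.le
  have hray : quadForm a b c x (D1 * t) = t ^ 2 * quadForm a b c D2 D1 := by
    rw [hxt, ← quadForm_mul_mul]
  have hmono : quadForm a b c x (D1 * t) ≤ quadForm a b c x y := by
    refine quadForm_le_quadForm_right hb ?_ ?_
    · rw [hxt]; nlinarith [mul_le_mul_of_nonneg_right hcD ht]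
    · rw [hxt] at hle; nlinarith
  calc (x * D1) ^ 2 * quadForm a b c D2 D1 = (D1 * D2) ^ 2 * quadForm a b c x (D1 * t) := by
        rw [hray, hxt]; ring
    _ ≤ (D1 * D2) ^ 2 * quadForm a b c x y := by gcongr

theorem min_sq_mul_quadForm_le (ha : 0 ≤ a) (hb : 0 ≤ b) {D1 D2 x y : ℝ} (hD1 : 0 < D1)
    (hD2 : 0 < D2) (hcD1 : c * D1 ≤ 2 * a * D2) (hcD2 : c * D2 ≤ 2 * b * D1) (hx : 0 ≤ x)
    (hy : 0 ≤ y) :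
    min (x * D1) (y * D2) ^ 2 * quadForm a b c D2 D1 ≤ (D1 * D2) ^ 2 * quadForm a b c x y := by
  rcases le_total (x * D1) (y * D2) with hle | hle
  · rw [min_eq_left hle]
    exact sq_mul_quadForm_le_of_le hb hD1 hD2 hcD2 hx hle
  · rw [min_eq_right hle, quadForm_swap, quadForm_swap x, mul_comm D1]
    exact sq_mul_quadForm_le_of_le ha hD2 hD1 hcD1 hy hle

theorem le_mul_sqrt_div_of_sq_mul_le {m K E δ : ℝ} (hK : 0 < K) (hE : 0 < E)
    (h : m ^ 2 * E ≤ K ^ 2 * δ) : m ≤ K * √(δ / E) := by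
  have hsq : (m / K) ^ 2 ≤ δ / E := by
    rw [div_pow, div_le_div_iff₀ (by positivity) hE]; linarith
  have := (le_abs_self _).trans (Real.abs_le_sqrt hsq)
  rwa [div_le_iff₀ hK, mul_comm] at this

end ThroughputOptimization

open ThroughputOptimization in
theorem throughput_optimization_general (a b c δ D1 D2 : ℝ)
    (ha : 0 < a) (hb : 0 < b) (hδ : 0 < δ)
    (hD1 : 0 < D1) (hD2 : 0 < D2)
    (hcond : c < min (2 * a * D2 / D1) (2 * b * D1 / D2)) :
    IsGreatest
      {v : ℝ | ∃ γ1 γ2 : ℝ, 0 < γ1 ∧ 0 < γ2 ∧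
        a * γ1^2 + b * γ2^2 - c * γ1 * γ2 ≤ δ ∧ v = min (γ1 * D1) (γ2 * D2)}
      (D1 * D2 * Real.sqrt (δ / (a * D2^2 - c * D1 * D2 + b * D1^2))) ∧
    ∃ γ1 γ2 : ℝ, 0 < γ1 ∧ 0 < γ2 ∧
      a * γ1^2 + b * γ2^2 - c * γ1 * γ2 ≤ δ ∧ γ1 * D1 = γ2 * D2 ∧
      min (γ1 * D1) (γ2 * D2) =
        D1 * D2 * Real.sqrt (δ / (a * D2^2 - c * D1 * D2 + b * D1^2)) := by
  obtain ⟨hcD1, hcD2⟩ := lt_min_iff.mp hcond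
  rw [lt_div_iff₀ hD1] at hcD1
  rw [lt_div_iff₀ hD2] at hcD2
  have hE : a * D2 ^ 2 - c * D1 * D2 + b * D1 ^ 2 = quadForm a b c D2 D1 := by
    unfold quadForm; ring
  rw [hE]
  have hEpos : 0 < quadForm a b c D2 D1 := quadForm_pos hD2 hD1 hcD1 hcD2
  set s := √(δ / quadForm a b c D2 D1)
  have hs : 0 < s := Real.sqrt_pos.mpr (div_pos hδ hEpos)
  have hopt : quadForm a b c (D2 * s) (D1 * s) = δ := by
    rw [quadForm_mul_mul, Real.sq_sqrt (div_pos hδ hEpos).le, div_mul_cancel₀ _ hEpos.ne']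
  have hmin : min (D2 * s * D1) (D1 * s * D2) = D1 * D2 * s := by
    rw [show D2 * s * D1 = D1 * D2 * s by ring, show D1 * s * D2 = D1 * D2 * s by ring, min_self]
  refine ⟨⟨⟨D2 * s, D1 * s, by positivity, by positivity, hopt.le, hmin.symm⟩, ?_⟩,
    D2 * s, D1 * s, by positivity, by positivity, hopt.le, by ring, hmin⟩
  rintro v ⟨x, y, hx, hy, hq, rfl⟩
  refine le_mul_sqrt_div_of_sq_mul_le (by positivity) hEpos ?_
  calc min (x * D1) (y * D2) ^ 2 * quadForm a b c D2 D1
      ≤ (D1 * D2) ^ 2 * quadForm a b c x y :=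
        min_sq_mul_quadForm_le ha.le hb.le hD1 hD2 hcD1.le hcD2.le hx.le hy.le
    _ ≤ (D1 * D2) ^ 2 * δ := by gcongr; exact hq

/-- Closed-form solution of the throughput optimization: maximizing
`min(γ₁D₁, γ₂D₂)` over `γ₁, γ₂ > 0` with `aγ₁² + bγ₂² − cγ₁γ₂ ≤ δ̄`,
when `c < min(2aD₂/D₁, 2bD₁/D₂)`, gives `D₁D₂·sqrt(δ̄/(aD₂² − cD₁D₂ + bD₁²))`,
attained at a point with `γ₁D₁ = γ₂D₂`. -/
theorem throughput_optimization (a b c δ D1 D2 : ℝ)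
    (ha : 0 < a) (hb : 0 < b) (hc : 0 < c) (hδ : 0 < δ)
    (hD1 : 0 < D1) (hD2 : 0 < D2)
    (hdet : c^2 < 4 * a * b)
    (hcond : c < min (2 * a * D2 / D1) (2 * b * D1 / D2)) :
    IsGreatest
      {v : ℝ | ∃ γ1 γ2 : ℝ, 0 < γ1 ∧ 0 < γ2 ∧
        a * γ1^2 + b * γ2^2 - c * γ1 * γ2 ≤ δ ∧ v = min (γ1 * D1) (γ2 * D2)}
      (D1 * D2 * Real.sqrt (δ / (a * D2^2 - c * D1 * D2 + b * D1^2))) ∧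
    ∃ γ1 γ2 : ℝ, 0 < γ1 ∧ 0 < γ2 ∧
      a * γ1^2 + b * γ2^2 - c * γ1 * γ2 ≤ δ ∧ γ1 * D1 = γ2 * D2 ∧
      min (γ1 * D1) (γ2 * D2) =
        D1 * D2 * Real.sqrt (δ / (a * D2^2 - c * D1 * D2 + b * D1^2)) :=
  throughput_optimization_general a b c δ D1 D2 ha hb hδ hD1 hD2 hcond
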